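/- arXiv:0712.0785 — 3 statements merged into one kernel-verified Lean document; each statement's English description precedes it below -/
import Mathlib

section
/- If the completeness index γ(f₁,…,f_n) is nonzero, then the differential resultant ∂Res(f₁,…,f_n) (the Macaulay resultant of the set PS(f₁,…,f_n)) is zero, because PS is a set of L polynomials in fewer than L − 1 differential variables, equivalently the resultant matrix M(L) has at least one zero column. -/
/-- One formal derivation step on the coefficient sequence (in the derivatives of one
differential indeterminate) of a linear differential polynomial. -/
def dstep {K : Type*} [CommRing K] (dK : K → K) (c : ℕ → K) : ℕ → K :=
  fun k => (if k = 0 then 0 else c (k - 1)) + dK (c k)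

/-- Coefficients of the `m`-th derivative of a linear differential polynomial with
coefficient sequence `c`. -/
def dIter {K : Type*} [CommRing K] (dK : K → K) (m : ℕ) (c : ℕ → K) : ℕ → K :=
  (dstep dK)^[m] c

lemma dIter_eq_zero_of_tail {K : Type*} [CommRing K] (dK : Derivation ℤ K K)
    (m : ℕ) (c : ℕ → K) (t : ℕ) (hc : ∀ k, t ≤ k → c k = 0) :
    ∀ k, t + m ≤ k → dIter (⇑dK) m c k = 0 := by
  induction m generalizing c t with
  | zero => intro k hk; simpa [dIter] using hc k (by omega)
  | succ m ih =>
    intro k hk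
    have h : dIter (⇑dK) (m + 1) c = dIter (⇑dK) m (dstep (⇑dK) c) := by
      simp [dIter, Function.iterate_succ_apply]
    rw [h]
    refine ih (dstep (⇑dK) c) (t + 1) ?_ k (by omega)
    intro l hl
    have h1 : c (l - 1) = 0 := hc _ (by omega)
    have h2 : c l = 0 := hc _ (by omega)
    simp [dstep, h1, h2, (by omega : l ≠ 0)]

/-- Let `f_i = a_i + ∑_{j,k} c i j k u_j^{(k)}` be linear ordinary
differential polynomials of orders `o_i` over a differential field, `N = ∑ o_i`.  If the
completeness index `γ(f₁,…,f_n)` is nonzero — i.e. there is a `j` with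
`ord(f_i, u_j) < o_i` for every `i`, equivalently `c i j (o i) = 0` for all `i` — then the
differential resultant `∂Res(f₁,…,f_n)`, the determinant of the `L × L` Macaulay-style
coefficient matrix `M(L)` of `PS = {∂^{N−o_i}f_i, …, f_i}` (rows `(i, m)`, `m ≤ N − o_i`;
columns the variables `u_j^{(k)}`, `k ≤ N`, plus a last column with `∂^m a_i`), is zero:
the column of `u_{jN}` is a zero column. -/
theorem dRes_eq_zero_of_completeness_index_pos
    {K : Type*} [Field K] (dK : Derivation ℤ K K)
    (n : ℕ) (hn : 2 ≤ n) (o : Fin n → ℕ) (N : ℕ) (hN : N = ∑ i, o i)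
    (a : Fin n → K) (c : Fin n → Fin (n - 1) → ℕ → K)
    (horder : ∀ i j k, o i < k → c i j k = 0)
    (hγpos : ∃ j, ∀ i, c i j (o i) = 0) :
    ∀ e : ((Fin (n - 1) × Fin (N + 1)) ⊕ Unit) ≃ (Σ i : Fin n, Fin (N - o i + 1)),
      Matrix.det (Matrix.of fun p q : (Fin (n - 1) × Fin (N + 1)) ⊕ Unit =>
        Sum.elim
          (fun jk : Fin (n - 1) × Fin (N + 1) =>
            dIter (⇑dK) ((e p).2 : ℕ) (c (e p).1 jk.1) (jk.2 : ℕ))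
          (fun _ : Unit => (⇑dK)^[(e p).2] (a (e p).1))
          q) = 0 := by
  obtain ⟨j, hj⟩ := hγpos
  intro e
  apply Matrix.det_eq_zero_of_column_eq_zero (Sum.inl (j, ⟨N, Nat.lt_succ_self N⟩))
  intro p
  simp only [Matrix.of_apply, Sum.elim_inl]
  set i := (e p).1 with hi
  have hm : ((e p).2 : ℕ) ≤ N - o i := Nat.lt_succ_iff.mp (e p).2.isLt
  have hoN : o i ≤ N := hN ▸ Finset.single_le_sum (f := o) (fun _ _ => Nat.zero_le _)
    (Finset.mem_univ i)
  refine dIter_eq_zero_of_tail dK _ _ (o i) ?_ N (by omega)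
  intro k hk
  rcases Nat.eq_or_lt_of_le hk with h | h
  · exact h ▸ hj i
  · exact horder i j k h
end

section
/- Let P(X,U) be a system of linear differential polynomial parametric equations x_i = P_i(U) = a_i − Σ_j L_{ij}(u_j), i = 1,…,n, with implicit ideal ID. If the greatest common right divisor of L_{1k},…,L_{nk} is non-constant for some k ∈ {1,…,n−1}, then P(X,U) is not proper. Equivalently, a necessary condition for properness is (L_{1j},…,L_{nj}) = 1 for all j = 1,…,n−1. -/
/-- The action on `x` of the differential operator `∑_{i ≤ dp} p i · ∂^i` with coefficients
`p i` in `K`, on an element `x` of a differential `K`-algebra `(E, δ)`. -/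
def Lop {K : Type*} [Field K] {E : Type*} [CommRing E] [Algebra K E]
    (δ : Derivation ℤ E E) (p : ℕ → K) (dp : ℕ) (x : E) : E :=
  ∑ i ∈ Finset.range (dp + 1), algebraMap K E (p i) * (⇑δ)^[i] x

/-- `(E, δ)` is a differential algebra over the differential field `(K, dK)`. -/
def Compat {K : Type*} [Field K] (dK : Derivation ℤ K K) {E : Type*} [CommRing E]
    [Algebra K E] (δ : Derivation ℤ E E) : Prop :=
  ∀ x : K, δ (algebraMap K E x) = algebraMap K E (dK x)

lemma Lop_zero {K : Type*} [Field K] {E : Type*} [CommRing E] [Algebra K E]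
    (δ : Derivation ℤ E E) (p : ℕ → K) (dp : ℕ) : Lop δ p dp 0 = 0 := by
  unfold Lop
  refine Finset.sum_eq_zero fun i _ => ?_
  rw [Function.iterate_fixed (map_zero δ), mul_zero]

/-- Let `P(X, U)` be the system of linear DPPEs
`x_i = P_i(U) = a_i − ∑_j L_{ij}(u_j)` with `L_{ij} ∈ K[∂]` (coefficients `L i j : ℕ → K`,
degrees bounded by `d`), over a universal differential field extension `(E, δ)` of
`(K, dK)` (universality: every nonconstant operator annihilates some nonzero element of
`E`).  If for some column `k` the operators `L_{1k}, …, L_{nk}` have a nonconstant common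
right divisor `g` — equivalently, `gcrd(L_{1k}, …, L_{nk})` is nonconstant — then the
system is not proper:  the parametrization map `τ ↦ (P_i(τ))_i` on `E^{n−1}` is not
injective (the generic zero has more than one preimage). -/
theorem not_proper_of_gcrd_nonconstant
    {K : Type*} [Field K] (dK : Derivation ℤ K K)
    (n : ℕ) (hn : 2 ≤ n) (d : ℕ)
    (L : Fin n → Fin (n - 1) → ℕ → K) (a : Fin n → K)
    (E : Type*) [Field E] [Algebra K E] (δ : Derivation ℤ E E)
    (hcompat : Compat dK δ)
    (hUniv : ∀ (g : ℕ → K) (dg : ℕ), 1 ≤ dg → g dg ≠ 0 →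
      ∃ η : E, η ≠ 0 ∧ Lop δ g dg η = 0)
    (hgcrd : ∃ (k : Fin (n - 1)) (g : ℕ → K) (dg : ℕ), 1 ≤ dg ∧ g dg ≠ 0 ∧
      ∀ i, ∃ (q : ℕ → K) (dq : ℕ), ∀ x : E,
        Lop δ (L i k) d x = Lop δ q dq (Lop δ g dg x)) :
    ¬ Function.Injective (fun τ : Fin (n - 1) → E => fun i =>
        algebraMap K E (a i) - ∑ j, Lop δ (L i j) d (τ j)) := by
  obtain ⟨k, g, dg, hdg, hgne, hdiv⟩ := hgcrd
  obtain ⟨η, hη, hLη⟩ := hUniv g dg hdg hgne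
  intro hinj
  have key : (fun j : Fin (n-1) => if j = k then η else 0) = (fun _ => (0:E)) := by
    apply hinj
    funext i
    simp only
    congr 1
    apply Finset.sum_congr rfl
    intro j _
    by_cases hj : j = k
    · subst hj
      obtain ⟨q, dq, hq⟩ := hdiv i
      simp [hq, hLη, Lop_zero]
    · simp [hj, Lop_zero]
  have := congrFun key k
  simp at this
  exact hη this
end

section
/- With L₁ = Σφ_i∂^i, L₂ = Σψ_j∂^j in K[∂] of orders o₁, o₂, the problem of finding D₁ = Σ_{i<o₁} α_i ∂^i and D₂ = Σ_{j<o₂} β_j ∂^j satisfying D₁L₂ − D₂L₁ = L₁L₂ − L₂L₁ is a linear system in the o₁ + o₂ unknowns α_i, β_j whose coefficient matrix is the differential homogeneous resultant matrix M(L^h) of H₁ = L₁(u), H₂ = L₂(u); hence if ∂Res^h(H₁, H₂) = det M(L^h) ≠ 0 the system has a unique solution. -/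
/-- The coefficient of `∂^k` in the product `L₁L₂` of the differential operators
`L₁ = ∑_{i ≤ o₁} φ_i ∂^i` and `L₂ = ∑_{j ≤ o₂} ψ_j ∂^j` (Leibniz expansion):
`c_k = ∑_{s = max(0, k−o₂)}^{min(o₁,k)} ∑_{i=s}^{o₁} φ_i ∂^{(i−s)}(ψ_{k−s})`. -/
def ck {K : Type*} [CommRing K] (dK : K → K) (φ ψ : ℕ → K) (o₁ o₂ k : ℕ) : K :=
  ∑ s ∈ Finset.Icc (k - o₂) (min o₁ k), ∑ i ∈ Finset.Icc s o₁,
    φ i * dK^[i - s] (ψ (k - s))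

lemma part1 {K : Type*} [Field K] (dK : K → K) (o₁ o₂ : ℕ) (φ ψ α β : ℕ → K)
    (kk : Fin (o₁ + o₂)) :
    (∑ i ∈ Finset.range o₁, α i * dIter dK i ψ (kk : ℕ)) -
        (∑ j ∈ Finset.range o₂, β j * dIter dK j φ (kk : ℕ)) =
      Matrix.vecMul
        (fun r : Fin (o₁ + o₂) => if (r : ℕ) < o₂ then -β (r : ℕ) else α ((r : ℕ) - o₂))
        (Matrix.of fun r q : Fin (o₁ + o₂) =>
          if (r : ℕ) < o₂ then dIter dK (r : ℕ) φ (q : ℕ)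
          else dIter dK ((r : ℕ) - o₂) ψ (q : ℕ)) kk := by
  simp only [Matrix.vecMul, dotProduct, Matrix.of_apply]
  have hsplit : ∀ r : Fin (o₁ + o₂),
      (if (r : ℕ) < o₂ then -β (r : ℕ) else α ((r : ℕ) - o₂)) *
        (if (r : ℕ) < o₂ then dIter dK (r : ℕ) φ (kk : ℕ)
          else dIter dK ((r : ℕ) - o₂) ψ (kk : ℕ)) =
      (fun n : ℕ => if n < o₂ then -β n * dIter dK n φ (kk : ℕ)
          else α (n - o₂) * dIter dK (n - o₂) ψ (kk : ℕ)) (r : ℕ) := by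
    intro r; by_cases h : (r : ℕ) < o₂ <;> simp [h]
  rw [Finset.sum_congr rfl (fun r _ => hsplit r),
    Fin.sum_univ_eq_sum_range (fun n : ℕ => if n < o₂ then -β n * dIter dK n φ (kk : ℕ)
      else α (n - o₂) * dIter dK (n - o₂) ψ (kk : ℕ))]
  have hsum : ∀ f : ℕ → K, ∑ n ∈ Finset.range (o₁ + o₂), f n =
      (∑ n ∈ Finset.Ico 0 o₂, f n) + ∑ n ∈ Finset.range (o₁ + o₂ - o₂), f (o₂ + n) := by
    intro f
    rw [Finset.range_eq_Ico, ← Finset.sum_Ico_consecutive _ (Nat.zero_le o₂)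
      (by omega : o₂ ≤ o₁ + o₂)]
    congr 1
    rw [Finset.sum_Ico_eq_sum_range]
  rw [hsum]
  have h1 : ∑ n ∈ Finset.Ico 0 o₂, (if n < o₂ then -β n * dIter dK n φ (kk : ℕ)
      else α (n - o₂) * dIter dK (n - o₂) ψ (kk : ℕ)) =
      -∑ j ∈ Finset.range o₂, β j * dIter dK j φ (kk : ℕ) := by
    rw [← Finset.range_eq_Ico, ← Finset.sum_neg_distrib]
    exact Finset.sum_congr rfl fun n hn => by
      rw [if_pos (Finset.mem_range.mp hn)]; ring
  have h2 : ∑ n ∈ Finset.range (o₁ + o₂ - o₂), (if o₂ + n < o₂ then -β (o₂ + n) * dIter dK (o₂ + n) φ (kk : ℕ)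
      else α (o₂ + n - o₂) * dIter dK (o₂ + n - o₂) ψ (kk : ℕ)) =
      ∑ i ∈ Finset.range o₁, α i * dIter dK i ψ (kk : ℕ) := by
    have : o₁ + o₂ - o₂ = o₁ := by omega
    rw [this]
    exact Finset.sum_congr rfl fun n _ => by
      rw [if_neg (by omega), Nat.add_sub_cancel_left]
  rw [h1, h2]; ring

/-- With `L₁ = ∑ φ_i ∂^i`, `L₂ = ∑ ψ_j ∂^j` of orders `o₁, o₂`, the
problem of finding `D₁ = ∑_{i<o₁} α_i ∂^i`, `D₂ = ∑_{j<o₂} β_j ∂^j` with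
`D₁L₂ − D₂L₁ = L₁L₂ − L₂L₁` is a linear system in the `o₁ + o₂` unknowns `α_i, β_j` whose
coefficient matrix is the differential homogeneous resultant matrix `M(L^h)` of
`H₁ = L₁(u)`, `H₂ = L₂(u)` (rows the coefficients of `∂^{o₂−1}H₁,…,H₁,∂^{o₁−1}H₂,…,H₂`);
hence if `∂Res^h(H₁,H₂) = det M(L^h) ≠ 0` the system has a unique solution. -/
theorem commutator_linear_system
    {K : Type*} [Field K] (dK : Derivation ℤ K K) (o₁ o₂ : ℕ)
    (φ ψ : ℕ → K) (hφ : φ o₁ ≠ 0) (hψ : ψ o₂ ≠ 0)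
    (hφ' : ∀ m, o₁ < m → φ m = 0) (hψ' : ∀ m, o₂ < m → ψ m = 0) :
    (∀ (α β : ℕ → K) (kk : Fin (o₁ + o₂)),
      (∑ i ∈ Finset.range o₁, α i * dIter (⇑dK) i ψ (kk : ℕ)) -
        (∑ j ∈ Finset.range o₂, β j * dIter (⇑dK) j φ (kk : ℕ)) =
      Matrix.vecMul
        (fun r : Fin (o₁ + o₂) => if (r : ℕ) < o₂ then -β (r : ℕ) else α ((r : ℕ) - o₂))
        (Matrix.of fun r q : Fin (o₁ + o₂) =>
          if (r : ℕ) < o₂ then dIter (⇑dK) (r : ℕ) φ (q : ℕ)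
          else dIter (⇑dK) ((r : ℕ) - o₂) ψ (q : ℕ)) kk) ∧
    (Matrix.det (Matrix.of fun r q : Fin (o₁ + o₂) =>
        if (r : ℕ) < o₂ then dIter (⇑dK) (r : ℕ) φ (q : ℕ)
        else dIter (⇑dK) ((r : ℕ) - o₂) ψ (q : ℕ)) ≠ 0 →
      ∃! p : (Fin o₁ → K) × (Fin o₂ → K),
        ∀ kk : Fin (o₁ + o₂),
          (∑ i : Fin o₁, p.1 i * dIter (⇑dK) (i : ℕ) ψ (kk : ℕ)) -
            (∑ j : Fin o₂, p.2 j * dIter (⇑dK) (j : ℕ) φ (kk : ℕ)) =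
          ck (⇑dK) φ ψ o₁ o₂ (kk : ℕ) - ck (⇑dK) ψ φ o₂ o₁ (kk : ℕ)) := by
  set M : Matrix (Fin (o₁ + o₂)) (Fin (o₁ + o₂)) K :=
    Matrix.of fun r q : Fin (o₁ + o₂) =>
      if (r : ℕ) < o₂ then dIter (⇑dK) (r : ℕ) φ (q : ℕ)
      else dIter (⇑dK) ((r : ℕ) - o₂) ψ (q : ℕ) with hM
  refine ⟨fun α β kk => part1 (⇑dK) o₁ o₂ φ ψ α β kk, fun hdet => ?_⟩
  have hunit : IsUnit M.det := isUnit_iff_ne_zero.mpr hdet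
  set b : Fin (o₁ + o₂) → K :=
    fun kk => ck (⇑dK) φ ψ o₁ o₂ (kk : ℕ) - ck (⇑dK) ψ φ o₂ o₁ (kk : ℕ) with hb
  set v : Fin (o₁ + o₂) → K := Matrix.vecMul b M⁻¹ with hv
  have hvM : Matrix.vecMul v M = b := by
    rw [hv, Matrix.vecMul_vecMul, Matrix.nonsing_inv_mul M hunit, Matrix.vecMul_one]
  -- auxiliary: from a pair p, the extended coefficient functions and the row vector
  have keyrow : ∀ p : (Fin o₁ → K) × (Fin o₂ → K), ∀ kk : Fin (o₁ + o₂),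
      (∑ i : Fin o₁, p.1 i * dIter (⇑dK) (i : ℕ) ψ (kk : ℕ)) -
        (∑ j : Fin o₂, p.2 j * dIter (⇑dK) (j : ℕ) φ (kk : ℕ)) =
      Matrix.vecMul (fun r : Fin (o₁ + o₂) =>
        if h : (r : ℕ) < o₂ then -p.2 ⟨(r : ℕ), h⟩
        else p.1 ⟨(r : ℕ) - o₂, by omega⟩) M kk := by
    intro p kk
    set α : ℕ → K := fun i => if h : i < o₁ then p.1 ⟨i, h⟩ else 0 with hα
    set β : ℕ → K := fun j => if h : j < o₂ then p.2 ⟨j, h⟩ else 0 with hβ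
    have e1 : (∑ i : Fin o₁, p.1 i * dIter (⇑dK) (i : ℕ) ψ (kk : ℕ)) =
        ∑ i ∈ Finset.range o₁, α i * dIter (⇑dK) i ψ (kk : ℕ) := by
      rw [← Fin.sum_univ_eq_sum_range (fun i => α i * dIter (⇑dK) i ψ (kk : ℕ))]
      exact Finset.sum_congr rfl fun i _ => by simp [hα, i.isLt]
    have e2 : (∑ j : Fin o₂, p.2 j * dIter (⇑dK) (j : ℕ) φ (kk : ℕ)) =
        ∑ j ∈ Finset.range o₂, β j * dIter (⇑dK) j φ (kk : ℕ) := by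
      rw [← Fin.sum_univ_eq_sum_range (fun j => β j * dIter (⇑dK) j φ (kk : ℕ))]
      exact Finset.sum_congr rfl fun j _ => by simp [hβ, j.isLt]
    rw [e1, e2, part1 (⇑dK) o₁ o₂ φ ψ α β kk]
    congr 1
    funext r
    by_cases h : (r : ℕ) < o₂
    · simp [h, hβ]
    · have h' : (r : ℕ) - o₂ < o₁ := by omega
      simp [h, hα, h']
  refine ⟨⟨fun i => v ⟨o₂ + (i : ℕ), by omega⟩, fun j => -v ⟨(j : ℕ), by omega⟩⟩, ?_, ?_⟩
  · intro kk
    rw [keyrow]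
    have : (fun r : Fin (o₁ + o₂) =>
        if h : (r : ℕ) < o₂ then
          -(fun j : Fin o₂ => -v ⟨(j : ℕ), by omega⟩) ⟨(r : ℕ), h⟩
        else (fun i : Fin o₁ => v ⟨o₂ + (i : ℕ), by omega⟩) ⟨(r : ℕ) - o₂, by omega⟩) = v := by
      funext r
      by_cases h : (r : ℕ) < o₂
      · simp only [dif_pos h, neg_neg]
      · simp only [dif_neg h]
        congr 1
        exact Fin.ext (by simp only []; omega)
    rw [this, hvM]
  · rintro q hq
    have hqM : Matrix.vecMul (fun r : Fin (o₁ + o₂) =>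
        if h : (r : ℕ) < o₂ then -q.2 ⟨(r : ℕ), h⟩
        else q.1 ⟨(r : ℕ) - o₂, by omega⟩) M = b := by
      funext kk
      rw [← keyrow q kk, hq kk]
    have hqv : (fun r : Fin (o₁ + o₂) =>
        if h : (r : ℕ) < o₂ then -q.2 ⟨(r : ℕ), h⟩
        else q.1 ⟨(r : ℕ) - o₂, by omega⟩) = v := by
      have := congrArg (fun w => Matrix.vecMul w M⁻¹) hqM
      simpa only [Matrix.vecMul_vecMul, Matrix.mul_nonsing_inv M hunit, Matrix.vecMul_one, hv]
        using this
    have hfun := fun r => congrFun hqv r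
    refine Prod.ext ?_ ?_
    · funext i
      have := hfun ⟨o₂ + (i : ℕ), by omega⟩
      rw [dif_neg (by simp)] at this
      simpa using this
    · funext j
      have := hfun ⟨(j : ℕ), by omega⟩
      rw [dif_pos (by simpa using j.isLt)] at this
      have := congrArg Neg.neg this
      simpa using this
end
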